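/- Let h, H : ℝ → ℝ with h(t) = a t² for some a > 0, and H differentiable, strictly convex with H(0) = 0, H'(0) = 0, H ≥ 0. Set g = h + H. Then 4·h(1)·g(1) < (g'(1))². -/

import Mathlib

/-! Strict convexity puts `H` strictly below its tangent line at `1`, so with `H 0 = 0` we get
`H 1 < H' 1`. Writing `g' 1 = 2a + H' 1`, this gives
`4 h(1) g(1) = 4a (a + H 1) < 4a (a + H' 1) ≤ (2a + H' 1)²`. -/

theorem StrictConvexOn.sub_lt_deriv_mul_sub {S : Set ℝ} {f : ℝ → ℝ} {x y : ℝ}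
    (hfc : StrictConvexOn ℝ S f) (hx : x ∈ S) (hy : y ∈ S) (hxy : x < y)
    (hfd : DifferentiableAt ℝ f y) : f y - f x < deriv f y * (y - x) := by
  have hslope := hfc.slope_lt_deriv hx hy hxy hfd
  rwa [slope_def_field, div_lt_iff₀ (sub_pos.mpr hxy)] at hslope

theorem deriv_const_mul_sq_add {H : ℝ → ℝ} {x : ℝ} (a : ℝ) (hH : DifferentiableAt ℝ H x) :
    deriv (fun t => a * t ^ 2 + H t) x = 2 * a * x + deriv H x := by
  have hsq : HasDerivAt (fun t : ℝ => a * t ^ 2) (2 * a * x) x := by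
    simpa [mul_comm, mul_left_comm, mul_assoc] using (hasDerivAt_pow 2 x).const_mul a
  exact (hsq.add hH.hasDerivAt).deriv

theorem four_mul_mul_add_lt_sq {a c d : ℝ} (ha : 0 < a) (hcd : c < d) :
    4 * a * (a + c) < (2 * a + d) ^ 2 := by
  nlinarith [sq_nonneg d]

theorem stmt_5_general (a : ℝ) (ha : 0 < a) (h H g : ℝ → ℝ)
    (hh : h = fun t => a * t ^ 2)
    (hHd : Differentiable ℝ H) (hHsc : StrictConvexOn ℝ Set.univ H)
    (hH0 : H 0 = 0)
    (hg : g = fun t => h t + H t) :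
    4 * h 1 * g 1 < (deriv g 1) ^ 2 := by
  subst hh hg
  have hH1 : H 1 < deriv H 1 := by
    simpa [hH0] using hHsc.sub_lt_deriv_mul_sub trivial trivial one_pos (hHd 1)
  rw [deriv_const_mul_sq_add a (hHd 1)]
  simpa using four_mul_mul_add_lt_sq ha hH1

theorem stmt_5 (a : ℝ) (ha : 0 < a) (h H g : ℝ → ℝ)
    (hh : h = fun t => a * t ^ 2)
    (hHd : Differentiable ℝ H) (hHsc : StrictConvexOn ℝ Set.univ H)
    (hH0 : H 0 = 0) (hH'0 : deriv H 0 = 0) (hHnn : ∀ t : ℝ, 0 ≤ H t)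
    (hg : g = fun t => h t + H t) :
    4 * h 1 * g 1 < (deriv g 1) ^ 2 :=
  stmt_5_general a ha h H g hh hHd hHsc hH0 hg
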